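/- If α(h) = γ · sign(h) · |h|^ρ with γ > 0 and ρ ∈ [0,1), and a differentiable function h: [0,∞) → R satisfies ḣ(t) ≥ −α(h(t))/2 with h(0) < 0, then h reaches zero in finite time; specifically h(t) ≥ 0 for all t ≥ T* where T* = 2|h(0)|^{1−ρ}/(γ(1−ρ)). -/

import Mathlib

/-!
While `h < 0` the inequality reads `ḣ ≥ (γ/2) |h|^ρ`, so `h` cannot become negative again once it
is nonnegative, and as long as `h` stays negative the quantity `|h|^(1-ρ)` decreases at the
constant rate `γ(1-ρ)/2`; it would have to drop below zero before time `T*`.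
-/

open Set

theorem nonneg_of_deriv_right_nonneg_of_neg {f f' : ℝ → ℝ} {a b : ℝ} (hab : a ≤ b)
    (hf : ContinuousOn f (Icc a b)) (hf' : ∀ x ∈ Ico a b, HasDerivWithinAt f (f' x) (Ici x) x)
    (ha : 0 ≤ f a) (hneg : ∀ x ∈ Ico a b, f x < 0 → 0 ≤ f' x) : 0 ≤ f b := by
  -- fence `-f` by the barriers `ε (x - a + 1)`, which it can only touch where `f < 0`
  have hfence : ∀ ε > 0, -f b ≤ ε * (b - a + 1) := fun ε hε =>
    image_le_of_deriv_right_lt_deriv_boundary (B := fun x => ε * (x - a + 1)) (B' := fun _ => ε)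
      hf.neg (fun x hx => (hf' x hx).neg)
      (by simp only [Pi.neg_apply, sub_self, zero_add, mul_one]; linarith)
      (fun x => by simpa using ((hasDerivAt_id x).sub_const a |>.add_const 1).const_mul ε)
      (fun x hx hfx => by
        have : f x < 0 := by simp only [Pi.neg_apply] at hfx; nlinarith [hx.1]
        linarith [hneg x hx this])
      ⟨hab, le_rfl⟩
  by_contra! hb
  have := hfence (-f b / (2 * (b - a + 1))) (by apply div_pos <;> linarith)
  rw [div_mul_eq_mul_div, mul_div_mul_right _ _ (by linarith)] at this
  linarith

theorem rpow_le_rpow_sub_of_deriv_le_neg_mul_rpow {f f' : ℝ → ℝ} {a b k ρ : ℝ} (hρ : ρ ≤ 1)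
    (hab : a ≤ b) (hf : ContinuousOn f (Icc a b)) (hf' : ∀ x ∈ Ioo a b, HasDerivAt f (f' x) x)
    (hpos : ∀ x ∈ Ioo a b, 0 < f x) (hbound : ∀ x ∈ Ioo a b, f' x ≤ -k * f x ^ ρ) :
    f b ^ (1 - ρ) ≤ f a ^ (1 - ρ) - k * (1 - ρ) * (b - a) := by
  have hderiv : ∀ x ∈ Ioo a b,
      HasDerivAt (fun y => f y ^ (1 - ρ)) (f' x * (1 - ρ) * f x ^ (1 - ρ - 1)) x :=
    fun x hx => (hf' x hx).rpow_const (Or.inl (hpos x hx).ne')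
  have hslope : ∀ x ∈ Ioo a b, f' x * (1 - ρ) * f x ^ (1 - ρ - 1) ≤ -(k * (1 - ρ)) := by
    intro x hx
    have h1ρ : 0 ≤ 1 - ρ := by linarith
    have hP : 0 < f x ^ ρ := Real.rpow_pos_of_pos (hpos x hx) ρ
    rw [show 1 - ρ - 1 = -ρ by ring, Real.rpow_neg (hpos x hx).le]
    calc f' x * (1 - ρ) * (f x ^ ρ)⁻¹ = (1 - ρ) * (f' x / f x ^ ρ) := by ring
      _ ≤ (1 - ρ) * -k := by
        gcongr
        rw [div_le_iff₀ hP]; linarith [hbound x hx]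
      _ = -(k * (1 - ρ)) := by ring
  have := (convex_Icc a b).image_sub_le_mul_sub_of_deriv_le
    (hf.rpow_const fun _ _ => Or.inr (sub_nonneg.2 hρ))
    (fun x hx => by
      rw [interior_Icc] at hx
      exact (hderiv x hx).differentiableAt.differentiableWithinAt)
    (fun x hx => by rw [interior_Icc] at hx; rw [(hderiv x hx).deriv]; exact hslope x hx)
    a (left_mem_Icc.2 hab) b (right_mem_Icc.2 hab) hab
  linarith

theorem stmt_15_general (γ ρ : ℝ) (hγ : 0 < γ) (hρ1 : ρ < 1)
    (h : ℝ → ℝ) (hdiff : Differentiable ℝ h)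
    (hineq : ∀ t : ℝ, 0 ≤ t → deriv h t ≥ -(γ * Real.sign (h t) * |h t| ^ ρ) / 2)
    (h0 : h 0 < 0) :
    ∀ t : ℝ, 2 * |h 0| ^ (1 - ρ) / (γ * (1 - ρ)) ≤ t → 0 ≤ h t := by
  intro t ht
  have hgrowth : ∀ x, 0 ≤ x → h x < 0 → γ / 2 * (-h x) ^ ρ ≤ deriv h x := fun x hx hx' => by
    have := hineq x hx
    rw [Real.sign_of_neg hx', abs_of_neg hx'] at this
    linarith
  have h1ρ : 0 < 1 - ρ := sub_pos.2 hρ1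
  have ht0 : 0 ≤ t := le_trans (by positivity) ht
  by_cases hreach : ∃ u ∈ Icc 0 t, 0 ≤ h u
  · obtain ⟨u, hu, hhu⟩ := hreach
    exact nonneg_of_deriv_right_nonneg_of_neg hu.2 hdiff.continuous.continuousOn
      (fun x _ => (hdiff x).hasDerivAt.hasDerivWithinAt) hhu
      (fun x hx hx' => (hgrowth x (hu.1.trans hx.1) hx').trans'
        (mul_nonneg (by positivity) (Real.rpow_nonneg (neg_nonneg.2 hx'.le) ρ)))
  push Not at hreach
  have hdecay := rpow_le_rpow_sub_of_deriv_le_neg_mul_rpow (f := fun x => -h x) (k := γ / 2)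
    hρ1.le ht0 hdiff.continuous.neg.continuousOn (fun x _ => (hdiff x).hasDerivAt.neg)
    (fun x hx => neg_pos.2 (hreach x (Ioo_subset_Icc_self hx)))
    (fun x hx => by linarith [hgrowth x hx.1.le (hreach x (Ioo_subset_Icc_self hx))])
  have hpos : 0 < (-h t) ^ (1 - ρ) := Real.rpow_pos_of_pos (neg_pos.2 (hreach t ⟨ht0, le_rfl⟩)) _
  rw [abs_of_neg h0, div_le_iff₀ (by nlinarith)] at ht
  nlinarith

/-- Finite-time convergence under the class-K function
`α(h) = γ · sign(h) · |h|^ρ`: if `ḣ(t) ≥ −α(h(t))/2` with `h(0) < 0`, then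
`h(t) ≥ 0` for all `t ≥ T* = 2|h(0)|^{1−ρ}/(γ(1−ρ))`. -/
theorem stmt_15 (γ ρ : ℝ) (hγ : 0 < γ) (hρ0 : 0 ≤ ρ) (hρ1 : ρ < 1)
    (h : ℝ → ℝ) (hdiff : Differentiable ℝ h)
    (hineq : ∀ t : ℝ, 0 ≤ t → deriv h t ≥ -(γ * Real.sign (h t) * |h t| ^ ρ) / 2)
    (h0 : h 0 < 0) :
    ∀ t : ℝ, 2 * |h 0| ^ (1 - ρ) / (γ * (1 - ρ)) ≤ t → 0 ≤ h t :=
  stmt_15_general γ ρ hγ hρ1 h hdiff hineq h0
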